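/- arXiv:2304.00820 — 4 statements merged into one kernel-verified Lean document; each statement's English description precedes it below -/
import Mathlib

section
/- As operators on polynomials in one variable u, for any nonnegative integer l and complex parameters α, β: Φ_u^{α,β} ∘ (multiplication by (1-u)^l) = (multiplication by (1-u)^l) ∘ (Φ_u^{α+2l,β} + lβ·Id − l(l+α−1)·M), where M is the operator of multiplication by (1+u)/(1-u); equivalently, for every polynomial f, Φ_u^{α,β}((1-u)^l f) = (1-u)^l Φ_u^{α+2l,β}(f) + lβ(1-u)^l f − l(l+α−1)(1+u)(1-u)^{l-1} f. -/
open Finset Polynomial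

/-- Rising Pochhammer symbol `(x)_m = x(x+1)⋯(x+m-1)` over `ℂ`. -/
noncomputable def poch (x : ℂ) (m : ℕ) : ℂ := (ascPochhammer ℂ m).eval x

/-- Jacobi polynomial `P_l^{a,b}(x) = ((a)_l/l!) ₂F₁(-l, l+a+b-1; a; (1-x)/2)`
in the parametrisation `a = α+1`, `b = β+1`. -/
noncomputable def jacobiP (l : ℕ) (a b : ℂ) : Polynomial ℂ :=
  C (poch a l / (l.factorial : ℂ)) *
    ∑ n ∈ range (l + 1),
      C (poch (-(l : ℂ)) n * poch ((l : ℂ) + a + b - 1) n / (poch a n * (n.factorial : ℂ))) *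
        (C (2⁻¹ : ℂ) * (1 - X)) ^ n

/-- The Jacobi differential operator `Φ^{a,b} = (x²-1)∂² + (a-b+(a+b)x)∂` on `ℂ[x]`. -/
noncomputable def jacobiOp (a b : ℂ) (p : Polynomial ℂ) : Polynomial ℂ :=
  (X ^ 2 - 1) * derivative (derivative p) + (C (a - b) + C (a + b) * X) * derivative p

theorem jacobiOp_conjugate_one_sub_pow (a b : ℂ) (l : ℕ) (f : Polynomial ℂ) :
    jacobiOp a b ((1 - X) ^ l * f) =
      (1 - X) ^ l * jacobiOp (a + 2 * (l : ℂ)) b f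
        + C ((l : ℂ) * b) * ((1 - X) ^ l * f)
        - C ((l : ℂ) * ((l : ℂ) + a - 1)) * ((1 + X) * (1 - X) ^ (l - 1) * f) := by
  have h0 : (1 - X : Polynomial ℂ) ≠ 0 := fun h => by simpa using congrArg (eval 0) h
  have h3 : C (l : ℂ) * ((1 - X) * (1 - X) ^ (l - 1)) = C (l : ℂ) * (1 - X : Polynomial ℂ) ^ l := by
    cases l with
    | zero => simp
    | succ n => rw [Nat.add_sub_cancel, ← pow_succ']
  have h1 : (1 - X : Polynomial ℂ) * derivative ((1 - X : Polynomial ℂ) ^ l)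
      = -(C (l : ℂ) * (1 - X) ^ l) := by
    rw [derivative_pow]
    simp only [derivative_sub, derivative_one, derivative_X, zero_sub]
    linear_combination -h3
  have h1' := congrArg derivative h1
  simp only [derivative_mul, derivative_sub, derivative_one, derivative_X, zero_sub,
    derivative_neg, derivative_C_mul, derivative_C] at h1'
  have h2 : (1 - X : Polynomial ℂ) ^ 2 * derivative (derivative ((1 - X : Polynomial ℂ) ^ l))
      = C (l : ℂ) * (C (l : ℂ) - 1) * (1 - X) ^ l := by
    linear_combination (1 - X : Polynomial ℂ) * h1' + (1 - C (l : ℂ)) * h1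
  apply mul_left_cancel₀ h0
  simp only [jacobiOp, derivative_mul, map_mul, map_add, map_sub, map_one, map_ofNat]
  linear_combination (-(1 + X) * f) * h2
    + (-2 * (1 + X) * (1 - X) * derivative f + (C a - C b + (C a + C b) * X) * f) * h1
    + ((C (l : ℂ) + C a - 1) * (1 + X) * f) * h3
end

section
/- As operators on polynomials in u, for nonnegative integers l, m and complex α, β: Φ_u^{α,β}((1-u)^l (1+u)^m f) = (1-u)^l(1+u)^m [ Φ_u^{α+2l,β+2m}(f) + (lβ+mα+2lm) f ] − l(l+α−1)(1+u)^{m+1}(1-u)^{l-1} f − m(m+β−1)(1-u)^{l+1}(1+u)^{m-1} f, for every polynomial f. -/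
open Finset Polynomial

lemma hu1 (l : ℕ) : (1 - X : Polynomial ℂ) * derivative ((1 - X) ^ l) = -C (l : ℂ) * (1 - X) ^ l := by
  cases l with
  | zero => simp
  | succ k =>
    rw [derivative_pow]
    simp only [Nat.succ_sub_one, derivative_sub, derivative_one, derivative_X]
    push_cast
    simp only [C_add, C_sub, C_mul, C_neg, C_1, C_0, map_ofNat]
    ring

lemma hv1 (m : ℕ) : (1 + X : Polynomial ℂ) * derivative ((1 + X) ^ m) = C (m : ℂ) * (1 + X) ^ m := by
  cases m with
  | zero => simp
  | succ k =>
    rw [derivative_pow]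
    simp only [Nat.succ_sub_one, derivative_add, derivative_one, derivative_X]
    push_cast
    simp only [C_add, C_sub, C_mul, C_neg, C_1, C_0, map_ofNat]
    ring

lemma hu2 (l : ℕ) : ((1 - X : Polynomial ℂ)) ^ 2 * derivative (derivative ((1 - X) ^ l)) =
    C ((l : ℂ) * ((l : ℂ) - 1)) * (1 - X) ^ l := by
  cases l with
  | zero => simp
  | succ k =>
    cases k with
    | zero => simp
    | succ j =>
      rw [derivative_pow]
      simp only [Nat.succ_sub_one]
      rw [derivative_mul, derivative_mul, derivative_pow]
      simp only [Nat.succ_sub_one, derivative_sub, derivative_one, derivative_X,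
        derivative_C, derivative_zero]
      push_cast
      simp only [C_add, C_sub, C_mul, C_neg, C_1, C_0, map_ofNat]
      ring

lemma hv2 (m : ℕ) : ((1 + X : Polynomial ℂ)) ^ 2 * derivative (derivative ((1 + X) ^ m)) =
    C ((m : ℂ) * ((m : ℂ) - 1)) * (1 + X) ^ m := by
  cases m with
  | zero => simp
  | succ k =>
    cases k with
    | zero => simp
    | succ j =>
      rw [derivative_pow]
      simp only [Nat.succ_sub_one]
      rw [derivative_mul, derivative_mul, derivative_pow]
      simp only [Nat.succ_sub_one, derivative_add, derivative_one, derivative_X,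
        derivative_C, derivative_zero]
      push_cast
      simp only [C_add, C_sub, C_mul, C_neg, C_1, C_0, map_ofNat]
      ring

lemma hu3 (l : ℕ) : C (l : ℂ) * ((1 - X : Polynomial ℂ) * (1 - X) ^ (l - 1)) =
    C (l : ℂ) * (1 - X) ^ l := by
  cases l with
  | zero => simp
  | succ k => rw [Nat.succ_sub_one, ← pow_succ']

lemma hv3 (m : ℕ) : C (m : ℂ) * ((1 + X : Polynomial ℂ) * (1 + X) ^ (m - 1)) =
    C (m : ℂ) * (1 + X) ^ m := by
  cases m with
  | zero => simp
  | succ k => rw [Nat.succ_sub_one, ← pow_succ']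

theorem jacobiOp_conjugate_two_factors (a b : ℂ) (l m : ℕ) (f : Polynomial ℂ) :
    jacobiOp a b ((1 - X) ^ l * (1 + X) ^ m * f) =
      (1 - X) ^ l * (1 + X) ^ m *
          (jacobiOp (a + 2 * (l : ℂ)) (b + 2 * (m : ℂ)) f
            + C ((l : ℂ) * b + (m : ℂ) * a + 2 * (l : ℂ) * (m : ℂ)) * f)
        - C ((l : ℂ) * ((l : ℂ) + a - 1)) * ((1 + X) ^ (m + 1) * (1 - X) ^ (l - 1) * f)
        - C ((m : ℂ) * ((m : ℂ) + b - 1)) * ((1 - X) ^ (l + 1) * (1 + X) ^ (m - 1) * f) := by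
  have hne : ((1 : Polynomial ℂ) - X) ^ 2 * (1 + X) ^ 2 ≠ 0 := by
    apply mul_ne_zero <;> apply pow_ne_zero <;>
      · intro h
        have := congrArg (fun p => Polynomial.eval 0 p) h
        simp at this
  refine mul_left_cancel₀ hne ?_
  simp only [jacobiOp, derivative_mul, derivative_add]
  linear_combination (norm := (simp only [C_add, C_sub, C_mul, C_neg, C_1, C_0, map_ofNat]; ring1))
    (-2 * (1 - X) ^ 2 * (1 + X) ^ 3 *
        (derivative ((1 + X) ^ m) * f + (1 + X) ^ m * derivative f)
      + (C (a - b) + C (a + b) * X) * (1 - X) * (1 + X) ^ 2 * (1 + X) ^ m * f) * hu1 l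
    + (-((1 - X) * (1 + X) ^ 3 * (1 + X) ^ m * f)) * hu2 l
    + (C ((l : ℂ) + a - 1) * ((1 - X) * (1 + X) ^ 3 * (1 + X) ^ m * f)) * hu3 l
    + (-2 * (1 - X) ^ 3 * (1 + X) ^ 2 * (1 - X) ^ l * derivative f
      + (C (a - b) + C (a + b) * X) * (1 - X) ^ 2 * (1 + X) * (1 - X) ^ l * f
      + C (2 * (l : ℂ)) * (1 - X) ^ 2 * (1 + X) ^ 2 * (1 - X) ^ l * f) * hv1 m
    + (-((1 - X) ^ 3 * (1 + X) * (1 - X) ^ l * f)) * hv2 m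
    + (C ((m : ℂ) + b - 1) * ((1 - X) ^ 3 * (1 + X) * (1 - X) ^ l * f)) * hv3 m
end

section
/- The pair of operators X = (1/2)N(1−v) − ((1−v)(1+v)/2)∂_v and Y = Φ_v^{λ₁,λ₂} on polynomials in v satisfies the Hahn algebra: with Z = [X,Y], one has [X,Z] = 2X² + (λ₁−λ₂−2N)X + Y − λ₁N and [Y,Z] = −2{X,Y} − (λ₁+λ₂)(λ₁+λ₂−2)X − (λ₁−λ₂−2N)Y + λ₁(λ₁+λ₂−2)N. -/
open Finset Polynomial

/-- `X = (1/2)N(1-v) - ((1-v)(1+v)/2)∂_v` on `ℂ[v]`, with scalar parameter `N`. -/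
noncomputable def XH (N : ℂ) (p : Polynomial ℂ) : Polynomial ℂ :=
  C (N / 2) * ((1 - X) * p) - C ((2 : ℂ)⁻¹) * ((1 - X) * (1 + X) * derivative p)

set_option maxHeartbeats 4000000 in
theorem hahn_algebra_one_variable (a b N : ℂ) :
    (∀ p : Polynomial ℂ,
        XH N (XH N (jacobiOp a b p) - jacobiOp a b (XH N p))
            - (XH N (jacobiOp a b (XH N p)) - jacobiOp a b (XH N (XH N p))) =
          2 * XH N (XH N p) + C (a - b - 2 * N) * XH N p + jacobiOp a b p - C (a * N) * p) ∧
    (∀ p : Polynomial ℂ,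
        jacobiOp a b (XH N (jacobiOp a b p) - jacobiOp a b (XH N p))
            - (XH N (jacobiOp a b (jacobiOp a b p)) - jacobiOp a b (XH N (jacobiOp a b p))) =
          -2 * (XH N (jacobiOp a b p) + jacobiOp a b (XH N p))
            - C ((a + b) * (a + b - 2)) * XH N p - C (a - b - 2 * N) * jacobiOp a b p
            + C (a * (a + b - 2) * N) * p) := by

  constructor <;> intro p <;> apply Polynomial.funext <;> intro x <;>
  · simp only [XH, jacobiOp, derivative_add, derivative_sub, derivative_mul,
      derivative_C, derivative_X, derivative_one, derivative_zero, derivative_X_pow,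
      derivative_ofNat, eval_add, eval_sub, eval_mul, eval_pow, eval_C, eval_X, eval_one,
      eval_zero, eval_ofNat, eval_natCast, eval_neg, map_neg,
      Nat.cast_ofNat, pow_one, mul_zero, zero_mul, add_zero, zero_add]
    ring
end

section
/- Let X, Y be linear operators on an (N+1)-dimensional complex vector space satisfying the Hahn algebra relations [X,Z] = 2X² + (λ₁−λ₂−2N)X + Y − λ₁N with Z = [X,Y], and suppose X is diagonalizable with spectrum {0,1,...,N} and simple eigenvalues. Then in any eigenbasis {v_l} of X with X v_l = l v_l, the operator Y is tridiagonal: Y v_l ∈ span{v_{l−1}, v_l, v_{l+1}}, and its diagonal entries are M(l) = −B(l)−D(l) where B(x) = (x−N)(x+λ₁), D(x) = x(x−λ₂−N). -/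
/-!
In an eigenbasis of `X` the bracket `[X, ·]` multiplies the `(m, l)` matrix entry by `m - l`, so
the relation, read entrywise, says `((m - l)² - 1) Y_{ml} = 0` off the diagonal; this forces
`Y_{ml} = 0` unless `|m - l| ≤ 1`. On the diagonal the left side vanishes, which leaves
`0 = 2l² + (λ₁ - λ₂ - 2N) l - λ₁N + Y_{ll}`.
-/

namespace Module.Basis

variable {R V ι : Type*} [CommRing R] [AddCommGroup V] [Module R V]
  {b : Basis ι R V} {X : V →ₗ[R] V} {μ : ι → R}

theorem repr_apply_of_apply_basis_eq_smul (hX : ∀ i, X (b i) = μ i • b i) (w : V) (i : ι) :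
    b.repr (X w) i = μ i * b.repr w i := by
  have hcoord : b.coord i ∘ₗ X = μ i • b.coord i := by
    refine b.ext fun j => ?_
    obtain rfl | hji := eq_or_ne j i
    · simp [hX]
    · simp [hX, hji]
  simpa using LinearMap.congr_fun hcoord w

theorem repr_commutator_apply_basis (hX : ∀ i, X (b i) = μ i • b i) (Z : V →ₗ[R] V) (l m : ι) :
    b.repr ((X ∘ₗ Z - Z ∘ₗ X) (b l)) m = (μ m - μ l) * b.repr (Z (b l)) m := by
  simp [hX, repr_apply_of_apply_basis_eq_smul hX]
  ring

theorem repr_commutator_commutator_apply_basis (hX : ∀ i, X (b i) = μ i • b i)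
    (Y : V →ₗ[R] V) (l m : ι) :
    b.repr ((X ∘ₗ (X ∘ₗ Y - Y ∘ₗ X) - (X ∘ₗ Y - Y ∘ₗ X) ∘ₗ X) (b l)) m =
      (μ m - μ l) ^ 2 * b.repr (Y (b l)) m := by
  rw [repr_commutator_apply_basis hX, repr_commutator_apply_basis hX]
  ring

end Module.Basis

theorem sq_natCast_sub_natCast_ne_one {R : Type*} [Ring R] [CharZero R] {m l : ℕ}
    (h : m + 1 < l ∨ l + 1 < m) : ((m : R) - l) ^ 2 ≠ 1 := by
  have hZ : ((m : ℤ) - l) ^ 2 ≠ 1 := by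
    rw [Ne, sq_eq_one_iff]
    omega
  exact_mod_cast hZ

theorem hahn_tridiagonality_general (N : ℕ) (lam1 lam2 : ℂ)
    (V : Type*) [AddCommGroup V] [Module ℂ V]
    (b : Module.Basis (Fin (N + 1)) ℂ V) (Xop Yop : V →ₗ[ℂ] V)
    -- X is diagonalizable with simple spectrum {0,1,…,N}, eigenbasis b:
    (hXb : ∀ l : Fin (N + 1), Xop (b l) = ((l : ℕ) : ℂ) • b l)
    -- the Hahn algebra relation [X,[X,Y]] = 2X² + (λ₁-λ₂-2N)X + Y - λ₁N:
    (hrel :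
      Xop ∘ₗ (Xop ∘ₗ Yop - Yop ∘ₗ Xop) - (Xop ∘ₗ Yop - Yop ∘ₗ Xop) ∘ₗ Xop =
        (2 : ℂ) • (Xop ∘ₗ Xop) + (lam1 - lam2 - 2 * (N : ℂ)) • Xop + Yop
          - (lam1 * (N : ℂ)) • LinearMap.id) :
    -- Y is tridiagonal in the basis b, with diagonal entries M(l) = -B(l)-D(l):
    (∀ l m : Fin (N + 1), ((m : ℕ) + 1 < (l : ℕ) ∨ (l : ℕ) + 1 < (m : ℕ)) →
        b.repr (Yop (b l)) m = 0) ∧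
    (∀ l : Fin (N + 1),
        b.repr (Yop (b l)) l =
          -((((l : ℕ) : ℂ) - (N : ℂ)) * (((l : ℕ) : ℂ) + lam1))
            - ((l : ℕ) : ℂ) * (((l : ℕ) : ℂ) - lam2 - (N : ℂ))) := by
  have entry (l m : Fin (N + 1)) :
      (((m : ℕ) : ℂ) - (l : ℕ)) ^ 2 * b.repr (Yop (b l)) m =
        (2 * ((l : ℕ) : ℂ) ^ 2 + (lam1 - lam2 - 2 * N) * (l : ℕ) - lam1 * N) *
          (if l = m then 1 else 0) + b.repr (Yop (b l)) m := by
    rw [← b.repr_commutator_commutator_apply_basis hXb, hrel]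
    simp [hXb, Finsupp.single_apply]
    split_ifs <;> ring
  refine ⟨fun l m hlm => ?_, fun l => ?_⟩
  · have hlm' : l ≠ m := by rintro rfl; omega
    have h := entry l m
    rw [if_neg hlm', mul_zero, zero_add] at h
    have hfactor : ((((m : ℕ) : ℂ) - (l : ℕ)) ^ 2 - 1) * b.repr (Yop (b l)) m = 0 := by
      linear_combination h
    exact (mul_eq_zero.1 hfactor).resolve_left
      (sub_ne_zero.2 (sq_natCast_sub_natCast_ne_one hlm))
  · have h := entry l l
    rw [if_pos rfl] at h
    linear_combination -h

theorem hahn_tridiagonality (N : ℕ) (hN : 0 < N) (lam1 lam2 : ℂ)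
    (h1 : ∀ j : ℕ, j < N → lam1 ≠ -(j : ℂ))
    (h2 : ∀ j : ℕ, j < N → lam2 ≠ -(j : ℂ))
    (h12 : ∀ j : ℕ, j ≤ 2 * N - 2 → lam1 + lam2 ≠ -(j : ℂ))
    (V : Type*) [AddCommGroup V] [Module ℂ V]
    (b : Module.Basis (Fin (N + 1)) ℂ V) (Xop Yop : V →ₗ[ℂ] V)
    -- X is diagonalizable with simple spectrum {0,1,…,N}, eigenbasis b:
    (hXb : ∀ l : Fin (N + 1), Xop (b l) = ((l : ℕ) : ℂ) • b l)
    -- the Hahn algebra relation [X,[X,Y]] = 2X² + (λ₁-λ₂-2N)X + Y - λ₁N: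
    (hrel :
      Xop ∘ₗ (Xop ∘ₗ Yop - Yop ∘ₗ Xop) - (Xop ∘ₗ Yop - Yop ∘ₗ Xop) ∘ₗ Xop =
        (2 : ℂ) • (Xop ∘ₗ Xop) + (lam1 - lam2 - 2 * (N : ℂ)) • Xop + Yop
          - (lam1 * (N : ℂ)) • LinearMap.id) :
    -- Y is tridiagonal in the basis b, with diagonal entries M(l) = -B(l)-D(l):
    (∀ l m : Fin (N + 1), ((m : ℕ) + 1 < (l : ℕ) ∨ (l : ℕ) + 1 < (m : ℕ)) →
        b.repr (Yop (b l)) m = 0) ∧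
    (∀ l : Fin (N + 1),
        b.repr (Yop (b l)) l =
          -((((l : ℕ) : ℂ) - (N : ℂ)) * (((l : ℕ) : ℂ) + lam1))
            - ((l : ℕ) : ℂ) * (((l : ℕ) : ℂ) - lam2 - (N : ℂ))) :=
  hahn_tridiagonality_general N lam1 lam2 V b Xop Yop hXb hrel
end
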